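/- Fix integers m ≥ 2, 1 ≤ t ≤ m−1 and a real number c > 0. Let γ be a 2-Frenet curve in the de Sitter space form S^m_t(c), with smooth positive curvature function k and signs (ε₁,ε₂). If γ is proper triharmonic (τ₃(γ) = ∇⁵T + R(∇³T,T)T − R(∇²T,∇T)T ≡ 0; note that ∇T = ε₂kN ≠ 0 so γ is automatically not a geodesic), then necessarily ε₂ = 1 (the normal N is space-like) and the curvature of γ is the constant k ≡ √(2c). -/

import Mathlib

open scoped BigOperators

noncomputable section

/-- The pseudo-Euclidean bilinear form of index `t` on `ℝⁿ` (modelled as `Fin n → ℝ`):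
`⟪x,y⟫_t = −∑_{i<t} x_i y_i + ∑_{i≥t} x_i y_i`. -/
def pform (t : ℕ) {n : ℕ} (x y : Fin n → ℝ) : ℝ :=
  ∑ i : Fin n, (if i.val < t then -(x i * y i) else x i * y i)

/-- The covariant derivative along `γ` induced on the quadric `⟪x,x⟫_t = 1/c`:
`∇X = X′ − c⟪X′,γ⟫_t γ`. -/
def cov (t : ℕ) {n : ℕ} (c : ℝ) (γ X : ℝ → Fin n → ℝ) : ℝ → Fin n → ℝ :=
  fun s => deriv X s - (c * pform t (deriv X s) (γ s)) • γ s

/-- The curvature operator of the space form: `R(X,Y)Z = c(⟪Y,Z⟫_t X − ⟪X,Z⟫_t Y)`. -/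
def curvOp (t : ℕ) {n : ℕ} (c : ℝ) (X Y Z : Fin n → ℝ) : Fin n → ℝ :=
  c • (pform t Y Z • X - pform t X Z • Y)

/-- The `r`-tension field of a curve `γ` in the space form:
`τ_r(γ) = ∇^{2r−1}T + ∑_{ℓ=0}^{r−2} (−1)^ℓ R(∇^{2r−3−ℓ}T, ∇^ℓT)T` with `T = γ′`. -/
def tensionField (t : ℕ) {n : ℕ} (c : ℝ) (r : ℕ) (γ : ℝ → Fin n → ℝ) (s : ℝ) : Fin n → ℝ :=
  (cov t c γ)^[2*r-1] (deriv γ) s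
    + ∑ ℓ ∈ Finset.range (r-1), ((-1 : ℝ)^ℓ) •
        curvOp t c ((cov t c γ)^[2*r-3-ℓ] (deriv γ) s) ((cov t c γ)^[ℓ] (deriv γ) s) (deriv γ s)

section helpers

variable {t n : ℕ}

lemma pform_comm (x y : Fin n → ℝ) : pform t x y = pform t y x := by
  unfold pform; congr 1; ext i; split_ifs <;> ring

lemma pform_add_left (x y z : Fin n → ℝ) : pform t (x + y) z = pform t x z + pform t y z := by
  unfold pform; rw [← Finset.sum_add_distrib]; congr 1; ext i
  simp only [Pi.add_apply]; split_ifs <;> ring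

lemma pform_smul_left (r : ℝ) (x z : Fin n → ℝ) : pform t (r • x) z = r * pform t x z := by
  unfold pform; rw [Finset.mul_sum]; congr 1; ext i
  simp only [Pi.smul_apply, smul_eq_mul]; split_ifs <;> ring

lemma pform_zero_left (z : Fin n → ℝ) : pform t (0 : Fin n → ℝ) z = 0 := by
  have := pform_smul_left (t := t) (0:ℝ) 0 z; simpa using this

lemma hasDerivAt_pform {X Y : ℝ → Fin n → ℝ} {X' Y' : Fin n → ℝ} {s : ℝ}
    (hX : HasDerivAt X X' s) (hY : HasDerivAt Y Y' s) :
    HasDerivAt (fun u => pform t (X u) (Y u))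
      (pform t X' (Y s) + pform t (X s) Y') s := by
  have hXi : ∀ i, HasDerivAt (fun u => X u i) (X' i) s := fun i => hasDerivAt_pi.1 hX i
  have hYi : ∀ i, HasDerivAt (fun u => Y u i) (Y' i) s := fun i => hasDerivAt_pi.1 hY i
  have h : HasDerivAt (fun u => ∑ i : Fin n, (if (i : Fin n).val < t then -(X u i * Y u i) else X u i * Y u i))
      (∑ i : Fin n, (if (i : Fin n).val < t then -(X' i * Y s i + X s i * Y' i) else X' i * Y s i + X s i * Y' i)) s := by
    apply HasDerivAt.fun_sum
    intro i _
    by_cases hi : (i : Fin n).val < t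
    · simpa [hi] using ((hXi i).fun_mul (hYi i)).fun_neg
    · simpa [hi] using (hXi i).fun_mul (hYi i)
  convert h using 1
  · unfold pform; rfl
  unfold pform
  rw [← Finset.sum_add_distrib]
  congr 1; ext i; split_ifs <;> ring

lemma hasDerivAt_of_contDiffOn {F : Type*} [NormedAddCommGroup F] [NormedSpace ℝ F]
    {I : Set ℝ} (hI : IsOpen I) {f : ℝ → F} (hf : ContDiffOn ℝ (⊤ : ℕ∞) f I) {s : ℝ} (hs : s ∈ I) :
    HasDerivAt f (deriv f s) s :=
  ((hf.differentiableOn (by simp)).differentiableAt (hI.mem_nhds hs)).hasDerivAt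

lemma contDiffOn_deriv' {F : Type*} [NormedAddCommGroup F] [NormedSpace ℝ F]
    {I : Set ℝ} (hI : IsOpen I) {f : ℝ → F} (hf : ContDiffOn ℝ (⊤ : ℕ∞) f I) :
    ContDiffOn ℝ (⊤ : ℕ∞) (deriv f) I :=
  hf.deriv_of_isOpen hI (by simp)

lemma eqOn_derivUnique {F : Type*} [NormedAddCommGroup F] [NormedSpace ℝ F]
    {I : Set ℝ} (hI : IsOpen I) {f g : ℝ → F} {v w : F} {s : ℝ} (hs : s ∈ I)
    (hfg : ∀ u ∈ I, f u = g u) (hf : HasDerivAt f v s) (hg : HasDerivAt g w s) : v = w := by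
  have h : HasDerivAt f w s :=
    hg.congr_of_eventuallyEq (Filter.eventually_of_mem (hI.mem_nhds hs) hfg)
  exact hf.unique h

lemma const_on_of_hasDerivAt_zero {I : Set ℝ} (hIo : IsOpen I) (hIc : Convex ℝ I) {f : ℝ → ℝ}
    (hf : ∀ s ∈ I, HasDerivAt f 0 s) {x y : ℝ} (hx : x ∈ I) (hy : y ∈ I) : f x = f y := by
  refine hIc.is_const_of_fderivWithin_eq_zero
    (fun s hs => ((hf s hs).differentiableAt).differentiableWithinAt) ?_ hx hy
  intro s hs
  rw [fderivWithin_of_isOpen hIo hs, ((hf s hs).hasFDerivAt).fderiv]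
  ext; simp

end helpers
/-- A proper triharmonic `2`-Frenet curve in the de Sitter space form `S^m_t(c)`
(`c > 0`) must have a space-like normal (`ε₂ = 1`) and constant curvature `k ≡ √(2c)`. -/
theorem stmt_4 (m t : ℕ) (hm : 2 ≤ m) (ht1 : 1 ≤ t) (ht2 : t ≤ m - 1)
    (c : ℝ) (hc : 0 < c)
    (I : Set ℝ) (hIopen : IsOpen I) (hIconn : I.OrdConnected) (hIne : I.Nonempty)
    (γ N : ℝ → Fin (m+1) → ℝ) (k : ℝ → ℝ)
    (hγ : ContDiffOn ℝ (⊤ : ℕ∞) γ I) (hN : ContDiffOn ℝ (⊤ : ℕ∞) N I) (hk : ContDiffOn ℝ (⊤ : ℕ∞) k I)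
    (hkpos : ∀ s ∈ I, 0 < k s)
    (ε₁ ε₂ : ℝ) (hε₁ : ε₁ = 1 ∨ ε₁ = -1) (hε₂ : ε₂ = 1 ∨ ε₂ = -1)
    (hquad : ∀ s ∈ I, pform t (γ s) (γ s) = 1 / c)
    (hunit : ∀ s ∈ I, pform t (deriv γ s) (deriv γ s) = ε₁)
    (hNtan : ∀ s ∈ I, pform t (N s) (γ s) = 0)
    (hNN : ∀ s ∈ I, pform t (N s) (N s) = ε₂)
    (hTN : ∀ s ∈ I, pform t (deriv γ s) (N s) = 0)
    (hFr1 : ∀ s ∈ I, cov t c γ (deriv γ) s = (ε₂ * k s) • N s)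
    (hFr2 : ∀ s ∈ I, cov t c γ N s = (-(ε₁ * k s)) • deriv γ s)
    (htri : ∀ s ∈ I, tensionField t c 3 γ s = 0) :
    ε₂ = 1 ∧ ∀ s ∈ I, k s = Real.sqrt (2 * c) := by
  obtain ⟨s₀, hs₀⟩ := hIne
  have hIconv : Convex ℝ I := hIconn.convex
  have hcne : c ≠ 0 := ne_of_gt hc
  have hε₁sq : ε₁ * ε₁ = 1 := by rcases hε₁ with h | h <;> rw [h] <;> norm_num
  have hε₂sq : ε₂ * ε₂ = 1 := by rcases hε₂ with h | h <;> rw [h] <;> norm_num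
  have hesq : (ε₁*ε₂) * (ε₁*ε₂) = 1 := by
    rcases hε₁ with h | h <;> rcases hε₂ with h' | h' <;> rw [h, h'] <;> norm_num
  set T := deriv γ with hTdef
  set K1 := deriv k with hK1def
  set K2 := deriv K1 with hK2def
  set K3 := deriv K2 with hK3def
  set K4 := deriv K3 with hK4def
  have hTsm : ContDiffOn ℝ (⊤ : ℕ∞) T I := contDiffOn_deriv' hIopen hγ
  have hNsm := hN
  have hK1sm : ContDiffOn ℝ (⊤ : ℕ∞) K1 I := contDiffOn_deriv' hIopen hk
  have hK2sm : ContDiffOn ℝ (⊤ : ℕ∞) K2 I := contDiffOn_deriv' hIopen hK1sm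
  have hK3sm : ContDiffOn ℝ (⊤ : ℕ∞) K3 I := contDiffOn_deriv' hIopen hK2sm
  have hγd : ∀ s ∈ I, HasDerivAt γ (T s) s := fun s hs => hasDerivAt_of_contDiffOn hIopen hγ hs
  have hTd : ∀ s ∈ I, HasDerivAt T (deriv T s) s := fun s hs => hasDerivAt_of_contDiffOn hIopen hTsm hs
  have hNd : ∀ s ∈ I, HasDerivAt N (deriv N s) s := fun s hs => hasDerivAt_of_contDiffOn hIopen hN hs
  have hkd : ∀ s ∈ I, HasDerivAt k (K1 s) s := fun s hs => hasDerivAt_of_contDiffOn hIopen hk hs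
  have hK1d : ∀ s ∈ I, HasDerivAt K1 (K2 s) s := fun s hs => hasDerivAt_of_contDiffOn hIopen hK1sm hs
  have hK2d : ∀ s ∈ I, HasDerivAt K2 (K3 s) s := fun s hs => hasDerivAt_of_contDiffOn hIopen hK2sm hs
  have hK3d : ∀ s ∈ I, HasDerivAt K3 (K4 s) s := fun s hs => hasDerivAt_of_contDiffOn hIopen hK3sm hs
  -- T is tangent
  have hpTγ : ∀ s ∈ I, pform t (T s) (γ s) = 0 := by
    intro s hs
    have h1 := hasDerivAt_pform (t := t) (hγd s hs) (hγd s hs)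
    have h2 : HasDerivAt (fun _ : ℝ => 1/c) 0 s := hasDerivAt_const s _
    have h3 := eqOn_derivUnique hIopen hs hquad h1 h2
    have h4 := pform_comm (t := t) (γ s) (T s)
    linarith
  have hpT'γ : ∀ s ∈ I, pform t (deriv T s) (γ s) = -ε₁ := by
    intro s hs
    have h1 := hasDerivAt_pform (t := t) (hTd s hs) (hγd s hs)
    have h2 : HasDerivAt (fun _ : ℝ => (0:ℝ)) 0 s := hasDerivAt_const s _
    have h3 := eqOn_derivUnique hIopen hs hpTγ h1 h2
    have h4 := hunit s hs
    linarith
  have hT' : ∀ s ∈ I, deriv T s = (ε₂ * k s) • N s + (-(c*ε₁)) • γ s := by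
    intro s hs
    have h := hFr1 s hs
    unfold cov at h
    rw [hpT'γ s hs] at h
    rw [sub_eq_iff_eq_add] at h
    rw [h]; module
  have hpN'γ : ∀ s ∈ I, pform t (deriv N s) (γ s) = 0 := by
    intro s hs
    have h1 := hasDerivAt_pform (t := t) (hNd s hs) (hγd s hs)
    have h2 : HasDerivAt (fun _ : ℝ => (0:ℝ)) 0 s := hasDerivAt_const s _
    have h3 := eqOn_derivUnique hIopen hs hNtan h1 h2
    have h4 := hTN s hs
    have h5 := pform_comm (t := t) (N s) (T s)
    linarith
  have hN' : ∀ s ∈ I, deriv N s = (-(ε₁ * k s)) • T s := by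
    intro s hs
    have h := hFr2 s hs
    unfold cov at h
    rw [hpN'γ s hs] at h
    rw [sub_eq_iff_eq_add] at h
    rw [h]; module
  -- pform expansion tables
  have hpγ3 : ∀ s ∈ I, ∀ α β ρ : ℝ, pform t (α • T s + β • N s + ρ • γ s) (γ s) = ρ * (1/c) := by
    intro s hs α β ρ
    rw [pform_add_left, pform_add_left, pform_smul_left, pform_smul_left, pform_smul_left,
      hpTγ s hs, hNtan s hs, hquad s hs]
    ring
  have hpT2 : ∀ s ∈ I, ∀ α β : ℝ, pform t (α • T s + β • N s) (T s) = α * ε₁ := by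
    intro s hs α β
    rw [pform_add_left, pform_smul_left, pform_smul_left, hunit s hs,
      pform_comm (t := t) (N s) (T s), hTN s hs]
    ring
  have hpN2 : ∀ s ∈ I, ∀ α β : ℝ, pform t (α • T s + β • N s) (N s) = β * ε₂ := by
    intro s hs α β
    rw [pform_add_left, pform_smul_left, pform_smul_left, hTN s hs, hNN s hs]
    ring
  -- the key covariant-derivative step
  have covStep : ∀ (f g f' g' : ℝ → ℝ) (X : ℝ → Fin (m+1) → ℝ),
      (∀ s ∈ I, X s = f s • T s + g s • N s) →
      (∀ s ∈ I, HasDerivAt f (f' s) s) → (∀ s ∈ I, HasDerivAt g (g' s) s) →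
      ∀ s ∈ I, cov t c γ X s = (f' s - ε₁ * k s * g s) • T s + (ε₂ * k s * f s + g' s) • N s := by
    intro f g f' g' X hX hf hg s hs
    have hTd' : HasDerivAt T ((ε₂ * k s) • N s + (-(c*ε₁)) • γ s) s := by
      rw [← hT' s hs]; exact hTd s hs
    have hNd' : HasDerivAt N ((-(ε₁ * k s)) • T s) s := by
      rw [← hN' s hs]; exact hNd s hs
    have h0 : HasDerivAt (fun u => f u • T u + g u • N u)
        ((f s • ((ε₂ * k s) • N s + (-(c*ε₁)) • γ s) + f' s • T s)
          + (g s • ((-(ε₁ * k s)) • T s) + g' s • N s)) s :=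
      ((hf s hs).smul hTd').add ((hg s hs).smul hNd')
    have hXd : HasDerivAt X
        ((f s • ((ε₂ * k s) • N s + (-(c*ε₁)) • γ s) + f' s • T s)
          + (g s • ((-(ε₁ * k s)) • T s) + g' s • N s)) s :=
      h0.congr_of_eventuallyEq (Filter.eventually_of_mem (hIopen.mem_nhds hs) hX)
    have hveq : (f s • ((ε₂ * k s) • N s + (-(c*ε₁)) • γ s) + f' s • T s)
          + (g s • ((-(ε₁ * k s)) • T s) + g' s • N s)
        = (f' s - ε₁ * k s * g s) • T s + (ε₂ * k s * f s + g' s) • N s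
            + (-(c * (ε₁ * f s))) • γ s := by module
    have hdX : deriv X s = (f' s - ε₁ * k s * g s) • T s + (ε₂ * k s * f s + g' s) • N s
            + (-(c * (ε₁ * f s))) • γ s := by rw [hXd.deriv, hveq]
    show deriv X s - (c * pform t (deriv X s) (γ s)) • γ s = _
    rw [hdX, hpγ3 s hs]
    have hcc : c * (-(c * (ε₁ * f s)) * (1/c)) = -(c * (ε₁ * f s)) := by field_simp
    rw [hcc]
    match_scalars <;> ring
  
  -- MACRO for sign goals
  -- Frenet chain
  have hC1 : ∀ s ∈ I, (cov t c γ)^[1] T s = (0:ℝ) • T s + (ε₂ * k s) • N s := by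
    intro s hs
    rw [Function.iterate_one, hFr1 s hs]
    module
  have hC2 : ∀ s ∈ I, (cov t c γ)^[2] T s
      = (-((ε₁*ε₂)*(k s*k s))) • T s + (ε₂ * K1 s) • N s := by
    intro s hs
    have h := covStep (fun _ => (0:ℝ)) (fun u => ε₂ * k u) (fun _ => (0:ℝ)) (fun u => ε₂ * K1 u)
      ((cov t c γ)^[1] T) hC1 (fun u hu => hasDerivAt_const u 0)
      (fun u hu => (hkd u hu).const_mul ε₂) s hs
    have hit : (cov t c γ)^[2] T s = cov t c γ ((cov t c γ)^[1] T) s :=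
      congrFun (Function.iterate_succ_apply' (cov t c γ) 1 T) s
    rw [hit, h]
    match_scalars <;> (rcases hε₁ with h1|h1 <;> rcases hε₂ with h2|h2 <;> simp only [h1, h2] <;> ring)
  have hC3 : ∀ s ∈ I, (cov t c γ)^[3] T s
      = (-(3*(ε₁*ε₂)*(k s*K1 s))) • T s + (ε₂ * K2 s - ε₁*(k s*(k s*k s))) • N s := by
    intro s hs
    have h := covStep (fun u => -((ε₁*ε₂)*(k u*k u))) (fun u => ε₂ * K1 u)
      (fun u => -((ε₁*ε₂)*(K1 u*k u + k u*K1 u))) (fun u => ε₂ * K2 u)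
      ((cov t c γ)^[2] T) hC2
      (fun u hu => (((hkd u hu).mul (hkd u hu)).const_mul (ε₁*ε₂)).neg)
      (fun u hu => (hK1d u hu).const_mul ε₂) s hs
    have hit : (cov t c γ)^[3] T s = cov t c γ ((cov t c γ)^[2] T) s :=
      congrFun (Function.iterate_succ_apply' (cov t c γ) 2 T) s
    rw [hit, h]
    match_scalars <;> (rcases hε₁ with h1|h1 <;> rcases hε₂ with h2|h2 <;> simp only [h1, h2] <;> ring)
  have hC4 : ∀ s ∈ I, (cov t c γ)^[4] T s
      = (k s*(k s*(k s*k s)) - 4*(ε₁*ε₂)*(k s*K2 s) - 3*(ε₁*ε₂)*(K1 s*K1 s)) • T s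
        + (ε₂ * K3 s - 6*ε₁*((k s*k s)*K1 s)) • N s := by
    intro s hs
    have h := covStep (fun u => -(3*(ε₁*ε₂)*(k u*K1 u))) (fun u => ε₂ * K2 u - ε₁*(k u*(k u*k u)))
      (fun u => -(3*(ε₁*ε₂)*(K1 u*K1 u + k u*K2 u)))
      (fun u => ε₂ * K3 u - ε₁*(K1 u*(k u*k u) + k u*(K1 u*k u + k u*K1 u)))
      ((cov t c γ)^[3] T) hC3
      (fun u hu => (((hkd u hu).mul (hK1d u hu)).const_mul (3*(ε₁*ε₂))).neg)
      (fun u hu => ((hK2d u hu).const_mul ε₂).sub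
        (((hkd u hu).mul ((hkd u hu).mul (hkd u hu))).const_mul ε₁))
      s hs
    have hit : (cov t c γ)^[4] T s = cov t c γ ((cov t c γ)^[3] T) s :=
      congrFun (Function.iterate_succ_apply' (cov t c γ) 3 T) s
    rw [hit, h]
    match_scalars <;> (rcases hε₁ with h1|h1 <;> rcases hε₂ with h2|h2 <;> simp only [h1, h2] <;> ring)
  have hC5 : ∀ s ∈ I, (cov t c γ)^[5] T s
      = (10*(k s*(k s*(k s*K1 s))) - 5*(ε₁*ε₂)*(k s*K3 s) - 10*(ε₁*ε₂)*(K1 s*K2 s)) • T s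
        + (ε₂ * K4 s + ε₂*(k s*(k s*(k s*(k s*k s)))) - 10*(ε₁*((k s*k s)*K2 s))
            - 15*(ε₁*(k s*(K1 s*K1 s)))) • N s := by
    intro s hs
    have h := covStep
      (fun u => k u*(k u*(k u*k u)) - 4*(ε₁*ε₂)*(k u*K2 u) - 3*(ε₁*ε₂)*(K1 u*K1 u))
      (fun u => ε₂ * K3 u - 6*ε₁*((k u*k u)*K1 u))
      (fun u => (K1 u*(k u*(k u*k u)) + k u*(K1 u*(k u*k u) + k u*(K1 u*k u + k u*K1 u)))
        - 4*(ε₁*ε₂)*(K1 u*K2 u + k u*K3 u) - 3*(ε₁*ε₂)*(K2 u*K1 u + K1 u*K2 u))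
      (fun u => ε₂ * K4 u - 6*ε₁*((K1 u*k u + k u*K1 u)*K1 u + (k u*k u)*K2 u))
      ((cov t c γ)^[4] T) hC4
      (fun u hu => (((hkd u hu).mul ((hkd u hu).mul ((hkd u hu).mul (hkd u hu)))).sub
          (((hkd u hu).mul (hK2d u hu)).const_mul (4*(ε₁*ε₂)))).sub
        (((hK1d u hu).mul (hK1d u hu)).const_mul (3*(ε₁*ε₂))))
      (fun u hu => ((hK3d u hu).const_mul ε₂).sub
        ((((hkd u hu).mul (hkd u hu)).mul (hK1d u hu)).const_mul (6*ε₁)))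
      s hs
    have hit : (cov t c γ)^[5] T s = cov t c γ ((cov t c γ)^[4] T) s :=
      congrFun (Function.iterate_succ_apply' (cov t c γ) 4 T) s
    rw [hit, h]
    match_scalars <;> (rcases hε₁ with h1|h1 <;> rcases hε₂ with h2|h2 <;> simp only [h1, h2] <;> ring)
  -- curvature terms
  have hR1 : ∀ s ∈ I, curvOp t c ((cov t c γ)^[3] T s) (T s) (T s)
      = (0:ℝ) • T s + (c*(ε₁*(ε₂ * K2 s - ε₁*(k s*(k s*k s))))) • N s := by
    intro s hs
    unfold curvOp
    rw [hC3 s hs, hunit s hs, hpT2 s hs]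
    match_scalars <;> ring
  have hR2 : ∀ s ∈ I, curvOp t c ((cov t c γ)^[2] T s) ((cov t c γ)^[1] T s) (T s)
      = (0:ℝ) • T s + (c*((ε₁*ε₂)*((k s*k s)*(ε₁*(ε₂*k s))))) • N s := by
    intro s hs
    unfold curvOp
    rw [hC2 s hs, hC1 s hs, hpT2 s hs, hpT2 s hs]
    match_scalars <;> ring
  -- the tension field equation, decomposed in the frame
  have hV : ∀ s ∈ I,
      (10*(k s*(k s*(k s*K1 s))) - 5*(ε₁*ε₂)*(k s*K3 s) - 10*(ε₁*ε₂)*(K1 s*K2 s)) • T s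
      + (ε₂ * K4 s + ε₂*(k s*(k s*(k s*(k s*k s)))) - 10*(ε₁*((k s*k s)*K2 s))
          - 15*(ε₁*(k s*(K1 s*K1 s)))
          + c*((ε₁*ε₂)*K2 s) - 2*(c*(k s*(k s*k s)))) • N s = 0 := by
    intro s hs
    have h := htri s hs
    unfold tensionField at h
    norm_num [Finset.sum_range_succ] at h
    rw [← hTdef] at h
    rw [show cov t c γ (cov t c γ (cov t c γ (cov t c γ (cov t c γ T)))) = (cov t c γ)^[5] T from rfl,
        show cov t c γ (cov t c γ (cov t c γ T)) = (cov t c γ)^[3] T from rfl,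
        show cov t c γ (cov t c γ T) = (cov t c γ)^[2] T from rfl,
        show cov t c γ T = (cov t c γ)^[1] T from rfl] at h
    rw [hC5 s hs, hR1 s hs, hR2 s hs] at h
    rw [← h]
    match_scalars <;> (rcases hε₁ with h1|h1 <;> rcases hε₂ with h2|h2 <;> simp only [h1, h2] <;> ring)
  have hE1 : ∀ s ∈ I,
      10*(k s*(k s*(k s*K1 s))) - 5*(ε₁*ε₂)*(k s*K3 s) - 10*(ε₁*ε₂)*(K1 s*K2 s) = 0 := by
    intro s hs
    have h := congrArg (fun x => pform t x (T s)) (hV s hs)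
    simp only [pform_zero_left] at h
    rw [hpT2 s hs] at h
    rcases hε₁ with h1|h1 <;> rw [h1] at h ⊢ <;> linarith
  have hE2 : ∀ s ∈ I,
      ε₂ * K4 s + ε₂*(k s*(k s*(k s*(k s*k s)))) - 10*(ε₁*((k s*k s)*K2 s))
        - 15*(ε₁*(k s*(K1 s*K1 s))) + c*((ε₁*ε₂)*K2 s) - 2*(c*(k s*(k s*k s))) = 0 := by
    intro s hs
    have h := congrArg (fun x => pform t x (N s)) (hV s hs)
    simp only [pform_zero_left] at h
    rw [hpN2 s hs] at h
    rcases hε₂ with h2|h2 <;> rw [h2] at h ⊢ <;> linarith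
  
  -- normalized form of E1
  have hE1'' : ∀ s ∈ I, k s*K3 s + 2*(K1 s*K2 s) = 2*(ε₁*ε₂)*(k s*(k s*(k s*K1 s))) := by
    intro s hs
    linear_combination (-(ε₁*ε₂)/5)*(hE1 s hs) - (k s*K3 s + 2*(K1 s*K2 s))*hesq
  -- first integral giving the constant A
  have hdA : ∀ s ∈ I, HasDerivAt
      (fun u => (ε₁*ε₂)*(k u*K2 u) + (ε₁*ε₂)*(K1 u*K1 u)/2 - k u*(k u*(k u*k u))/2) 0 s := by
    intro s hs
    have hd := ((((hkd s hs).mul (hK2d s hs)).const_mul (ε₁*ε₂)).add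
        ((((hK1d s hs).mul (hK1d s hs)).const_mul (ε₁*ε₂)).div_const 2)).sub
      (((hkd s hs).mul ((hkd s hs).mul ((hkd s hs).mul (hkd s hs)))).div_const 2)
    refine hd.congr_deriv ?_
    simp only [Pi.mul_apply]
    linear_combination (ε₁*ε₂)*(hE1'' s hs) + 2*(k s*(k s*(k s*K1 s)))*hesq
  have hAint : ∀ s ∈ I, (ε₁*ε₂)*(k s*K2 s) + (ε₁*ε₂)*(K1 s*K1 s)/2 - k s*(k s*(k s*k s))/2
      = (ε₁*ε₂)*(k s₀*K2 s₀) + (ε₁*ε₂)*(K1 s₀*K1 s₀)/2 - k s₀*(k s₀*(k s₀*k s₀))/2 :=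
    fun s hs => const_on_of_hasDerivAt_zero hIopen hIconv hdA hs hs₀
  set A : ℝ := (ε₁*ε₂)*(k s₀*K2 s₀) + (ε₁*ε₂)*(K1 s₀*K1 s₀)/2 - k s₀*(k s₀*(k s₀*k s₀))/2 with hAdef
  -- first integral giving the constant B
  have hdB : ∀ s ∈ I, HasDerivAt
      (fun u => (k u*k u)*K2 u - 2/5*((ε₁*ε₂)*(k u*(k u*(k u*(k u*k u)))))) 0 s := by
    intro s hs
    have hd := (((hkd s hs).mul (hkd s hs)).mul (hK2d s hs)).sub
      ((((hkd s hs).mul ((hkd s hs).mul ((hkd s hs).mul ((hkd s hs).mul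
        (hkd s hs))))).const_mul (ε₁*ε₂)).const_mul (2/5))
    refine hd.congr_deriv ?_
    simp only [Pi.mul_apply]
    linear_combination (k s)*(hE1'' s hs)
  have hBint : ∀ s ∈ I, (k s*k s)*K2 s - 2/5*((ε₁*ε₂)*(k s*(k s*(k s*(k s*k s)))))
      = (k s₀*k s₀)*K2 s₀ - 2/5*((ε₁*ε₂)*(k s₀*(k s₀*(k s₀*(k s₀*k s₀))))) :=
    fun s hs => const_on_of_hasDerivAt_zero hIopen hIconv hdB hs hs₀
  set B : ℝ := (k s₀*k s₀)*K2 s₀ - 2/5*((ε₁*ε₂)*(k s₀*(k s₀*(k s₀*(k s₀*k s₀))))) with hBdef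
  -- algebraic consequence for K1²
  have hK1id : ∀ s ∈ I, k s*K1 s^2 = (ε₁*ε₂)/5*k s^5 + 2*(ε₁*ε₂)*A*k s - 2*B := by
    intro s hs
    linear_combination (2*(ε₁*ε₂)*k s)*(hAint s hs) - (2*((ε₁*ε₂)*(ε₁*ε₂)))*(hBint s hs)
      - (k s*K1 s^2 + 4/5*(ε₁*ε₂)*k s^5 + 2*B)*hesq
  -- second derivative identity (differentiating k·E1'')
  have hK4a : ∀ s ∈ I, 2*(K1 s^2*K2 s) + 2*(k s*K2 s^2) + 4*(k s*(K1 s*K3 s)) + k s^2*K4 s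
      - 8*(ε₁*ε₂)*(k s^3*K1 s^2) - 2*(ε₁*ε₂)*(k s^4*K2 s) = 0 := by
    intro s hs
    have hF3z : ∀ u ∈ I, 2*(k u*(K1 u*K2 u)) + (k u*k u)*K3 u
        - 2*(ε₁*ε₂)*((k u*(k u*(k u*k u)))*K1 u) = (fun _ : ℝ => (0:ℝ)) u := by
      intro u hu
      simp only
      linear_combination (k u)*(hE1'' u hu)
    have hd := ((((hkd s hs).mul ((hK1d s hs).mul (hK2d s hs))).const_mul 2).add
        (((hkd s hs).mul (hkd s hs)).mul (hK3d s hs))).sub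
      ((((hkd s hs).mul ((hkd s hs).mul ((hkd s hs).mul (hkd s hs)))).mul
        (hK1d s hs)).const_mul (2*(ε₁*ε₂)))
    have h0 := eqOn_derivUnique hIopen hs hF3z hd (hasDerivAt_const s 0)
    simp only [Pi.mul_apply] at h0
    linear_combination h0
  -- the grand polynomial identity satisfied by k
  have hq : ∀ s ∈ I, (-(126/25)*ε₂)*k s^10 + (-(8/5)*c)*k s^8 + (-(126/5)*(ε₂*A))*k s^6
      + ((84/5)*(ε₁*B))*k s^5 + ((ε₁*ε₂)*(c*B))*k s^3 + (12*(ε₁*(A*B)))*k s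
      + (-(14*(ε₂*B^2))) = 0 := by
    intro s hs
    linear_combination (k s^5)*(hE2 s hs) - (k s^3*ε₂)*(hK4a s hs)
      + (4*(k s^3*(K1 s*ε₂)))*(hE1'' s hs)
      - (-2*(ε₂*B) + 6*(k s*(K1 s^2*ε₂)) - 2*(k s^2*(K2 s*ε₂)) + (ε₁*ε₂)*(c*k s^3)
          - 10*(ε₁*k s^5) + 6/5*(ε₁*(ε₂^2*k s^5)))*(hBint s hs)
      - (6*(ε₂*B) - 15*(ε₁*k s^5) + 12/5*(ε₁*(ε₂^2*k s^5)))*(hK1id s hs)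
      - (-30*(k s^6*(ε₂*A)) + 24/5*(k s^6*(ε₂^3*A)) + 2/5*(k s^8*(ε₂^2*c)) - 7*(k s^10*ε₂)
          + 24/25*(k s^10*ε₂^3))*hε₁sq
      - (12*(k s*(ε₁*(A*B))) - 16/5*(k s^5*(ε₁*B)) + 24/5*(k s^6*(ε₂*A)) + 2/5*(k s^8*c)
          + 24/25*(k s^10*ε₂))*hε₂sq
  -- k is constant on I
  have hkconst : ∀ x ∈ I, ∀ y ∈ I, k x = k y := by
    intro x hx y hy
    by_contra hne
    set p : Polynomial ℝ :=
      Polynomial.C (-(126/25)*ε₂) * Polynomial.X^10 + Polynomial.C (-(8/5)*c) * Polynomial.X^8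
      + Polynomial.C (-(126/5)*(ε₂*A)) * Polynomial.X^6
      + Polynomial.C ((84/5)*(ε₁*B)) * Polynomial.X^5
      + Polynomial.C ((ε₁*ε₂)*(c*B)) * Polynomial.X^3 + Polynomial.C (12*(ε₁*(A*B))) * Polynomial.X
      + Polynomial.C (-(14*(ε₂*B^2))) with hpdef
    have hroot : Set.uIcc (k x) (k y) ⊆ {z | p.IsRoot z} := by
      intro z hz
      have hsub : Set.uIcc x y ⊆ I := hIconn.uIcc_subset hx hy
      have hcont : ContinuousOn k (Set.uIcc x y) := (hk.continuousOn).mono hsub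
      obtain ⟨w, hw, hwz⟩ := intermediate_value_uIcc hcont hz
      show Polynomial.eval z p = 0
      rw [hpdef]
      simp only [Polynomial.eval_add, Polynomial.eval_mul, Polynomial.eval_pow,
        Polynomial.eval_C, Polynomial.eval_X]
      rw [← hwz]
      linear_combination hq w (hsub hw)
    have hinf : Set.Infinite {z | p.IsRoot z} :=
      (Set.Icc_infinite (inf_lt_sup.mpr hne)).mono hroot
    have hp0 : p = 0 := Polynomial.eq_zero_of_infinite_isRoot p hinf
    have h10 : Polynomial.coeff p 10 = Polynomial.coeff (0 : Polynomial ℝ) 10 := by rw [hp0]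
    rw [hpdef] at h10
    simp only [Polynomial.coeff_add, Polynomial.coeff_C_mul, Polynomial.coeff_X_pow,
      Polynomial.coeff_X, Polynomial.coeff_C, Polynomial.coeff_zero] at h10
    norm_num at h10
    rcases hε₂ with h2|h2 <;> rw [h2] at h10 <;> norm_num at h10
  -- all derivatives of k vanish on I
  have hK1z : ∀ s ∈ I, K1 s = 0 := fun s hs =>
    eqOn_derivUnique hIopen hs (fun u hu => hkconst u hu s₀ hs₀) (hkd s hs)
      (hasDerivAt_const s (k s₀))
  have hK2z : ∀ s ∈ I, K2 s = 0 := fun s hs =>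
    eqOn_derivUnique hIopen hs hK1z (hK1d s hs) (hasDerivAt_const s 0)
  have hK3z : ∀ s ∈ I, K3 s = 0 := fun s hs =>
    eqOn_derivUnique hIopen hs hK2z (hK2d s hs) (hasDerivAt_const s 0)
  have hK4z : ∀ s ∈ I, K4 s = 0 := fun s hs =>
    eqOn_derivUnique hIopen hs hK3z (hK3d s hs) (hasDerivAt_const s 0)
  -- conclusion
  have hmain : ∀ s ∈ I, ε₂ * k s^2 = 2*c := by
    intro s hs
    have h3 : ε₂ * k s^2 * k s^3 = 2*c*k s^3 := by
      linear_combination (hE2 s hs) - ε₂*(hK4z s hs)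
        + (10*(ε₁*(k s*k s)) - c*(ε₁*ε₂))*(hK2z s hs) + 15*(ε₁*(k s*K1 s))*(hK1z s hs)
    exact mul_right_cancel₀ (pow_ne_zero 3 (ne_of_gt (hkpos s hs))) h3
  have hfin2 : ε₂ = 1 := by
    rcases hε₂ with h2|h2
    · exact h2
    · exfalso
      have h := hmain s₀ hs₀
      rw [h2] at h
      nlinarith [hkpos s₀ hs₀, hc, sq_nonneg (k s₀)]
  refine ⟨hfin2, fun s hs => ?_⟩
  have h := hmain s hs
  rw [hfin2, one_mul] at h
  rw [← h, Real.sqrt_sq (hkpos s hs).le]
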